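/- Under the threshold seeding rule, if the threshold v_c satisfies v_c > v_h^s = (1 + δ(n-1)/(2β))/(1 - (δ/(2β))²), then for every row-stochastic graph G on n vertices with zero diagonal, no agent has centrality exceeding v_c, i.e., the seeding capacity is zero. -/

import Mathlib

/-!
Write `α = δ / (2β) ∈ [0, 1)`; the centrality vector solves `v = 𝟙 + α • (v ᵥ* G)`.
A row-stochastic `G` preserves sums under `x ↦ x ᵥ* G`, so a nonnegative `y ≤ α • (y ᵥ* G)`
must vanish. Applied to `|x|` this makes `1 - α • G` invertible, and applied to the negative
part of `v` it gives `v ≥ 0`. Summing the fixed-point equation gives `(1 - α) ∑ v = n`. Without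
self-loops `(v ᵥ* G) j ≤ ∑ v - v j`, hence `v j (1 + α) ≤ 1 + α n / (1 - α)`, which is the bound
`v j ≤ (1 + α (n - 1)) / (1 - α²)`.
-/

open Matrix Finset

namespace Matrix

variable {ι : Type*} [Fintype ι] {G : Matrix ι ι ℝ} {α : ℝ}

lemma vecMul_le_vecMul_of_nonneg (hG : ∀ i j, 0 ≤ G i j) {x y : ι → ℝ} (hxy : x ≤ y) :
    x ᵥ* G ≤ y ᵥ* G :=
  fun j => sum_le_sum fun i _ => mul_le_mul_of_nonneg_right (hxy i) (hG i j)

lemma abs_vecMul_le (hG : ∀ i j, 0 ≤ G i j) (x : ι → ℝ) : |x ᵥ* G| ≤ |x| ᵥ* G := fun j =>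
  calc |(x ᵥ* G) j| ≤ ∑ i, |x i * G i j| := abs_sum_le_sum_abs _ _
    _ = (|x| ᵥ* G) j := sum_congr rfl fun i _ => by rw [abs_mul, abs_of_nonneg (hG i j)]; rfl

variable [DecidableEq ι]

lemma sum_vecMul_of_mem_rowStochastic (hG : G ∈ rowStochastic ℝ ι) (x : ι → ℝ) :
    ∑ j, (x ᵥ* G) j = ∑ i, x i := by
  rw [← mulVec_transpose]
  exact sum_mulVec_of_mem_colStochastic (transpose_mem_colStochastic_iff_mem_rowStochastic.2 hG)

lemma eq_zero_of_le_smul_vecMul (hG : G ∈ rowStochastic ℝ ι) (hα : α < 1) {y : ι → ℝ}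
    (hy0 : 0 ≤ y) (hy : y ≤ α • (y ᵥ* G)) : y = 0 := by
  have hsum : ∑ i, y i ≤ α * ∑ i, y i :=
    calc ∑ i, y i ≤ ∑ i, (α • (y ᵥ* G)) i := sum_le_sum fun i _ => hy i
      _ = α * ∑ i, y i := by
        simp only [Pi.smul_apply, smul_eq_mul, ← mul_sum, sum_vecMul_of_mem_rowStochastic hG]
  have hsum0 : ∑ i, y i = 0 := by nlinarith [sum_nonneg fun i (_ : i ∈ univ) => hy0 i]
  funext i
  exact (sum_eq_zero_iff_of_nonneg fun i _ => hy0 i).1 hsum0 i (mem_univ i)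

theorem isUnit_one_sub_smul_of_mem_rowStochastic (hG : G ∈ rowStochastic ℝ ι) (hα : |α| < 1) :
    IsUnit (1 - α • G) := by
  rw [isUnit_iff_isUnit_det, isUnit_iff_ne_zero, Ne, ← exists_vecMul_eq_zero_iff]
  rintro ⟨x, hx0, hx⟩
  rw [vecMul_sub, vecMul_one, vecMul_smul, sub_eq_zero] at hx
  have habs : |x| ≤ |α| • (|x| ᵥ* G) := fun i =>
    calc |x i| = |α| * |(x ᵥ* G) i| := by rw [← abs_mul]; exact congrArg abs (congrFun hx i)
      _ ≤ |α| * (|x| ᵥ* G) i := mul_le_mul_of_nonneg_left (abs_vecMul_le hG.1 x i) (abs_nonneg α)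
  have h0 := eq_zero_of_le_smul_vecMul hG hα (abs_nonneg x) habs
  exact hx0 (funext fun i => abs_eq_zero.1 (congrFun h0 i))

lemma nonneg_of_smul_vecMul_le (hG : G ∈ rowStochastic ℝ ι) (hα0 : 0 ≤ α) (hα1 : α < 1)
    {x : ι → ℝ} (hx : α • (x ᵥ* G) ≤ x) : 0 ≤ x := by
  rw [← negPart_eq_zero]
  refine eq_zero_of_le_smul_vecMul hG hα1 (negPart_nonneg x) (sup_le ?_ ?_)
  · calc -x ≤ α • (-x ᵥ* G) := by rw [neg_vecMul, smul_neg]; exact neg_le_neg hx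
      _ ≤ α • (x⁻ ᵥ* G) :=
        smul_le_smul_of_nonneg_left (vecMul_le_vecMul_of_nonneg hG.1 (neg_le_negPart x)) hα0
  · exact smul_nonneg hα0 (nonneg_vecMul_of_mem_rowStochastic hG (negPart_nonneg x))

end Matrix

section Centrality

variable {ι : Type*} [Fintype ι] [DecidableEq ι] {G : Matrix ι ι ℝ} {α : ℝ}

noncomputable def centrality (α : ℝ) (G : Matrix ι ι ℝ) : ι → ℝ :=
  (1 - α • Gᵀ)⁻¹ *ᵥ 1

lemma centrality_eq (hG : G ∈ rowStochastic ℝ ι) (hα : |α| < 1) :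
    centrality α G = 1 + α • (centrality α G ᵥ* G) := by
  have hdet : IsUnit (1 - α • Gᵀ).det := by
    rw [← transpose_one, ← transpose_smul, ← transpose_sub, det_transpose, ← isUnit_iff_isUnit_det]
    exact isUnit_one_sub_smul_of_mem_rowStochastic hG hα
  refine eq_add_of_sub_eq ?_
  calc centrality α G - α • (centrality α G ᵥ* G) = (1 - α • Gᵀ) *ᵥ centrality α G := by
        rw [sub_mulVec, one_mulVec, smul_mulVec, mulVec_transpose]
    _ = 1 := by rw [centrality, mulVec_mulVec, mul_nonsing_inv _ hdet, one_mulVec]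

lemma centrality_nonneg (hG : G ∈ rowStochastic ℝ ι) (hα0 : 0 ≤ α) (hα1 : α < 1) :
    0 ≤ centrality α G := by
  refine nonneg_of_smul_vecMul_le hG hα0 hα1 ?_
  calc α • (centrality α G ᵥ* G) ≤ 1 + α • (centrality α G ᵥ* G) :=
        le_add_of_nonneg_left zero_le_one
    _ = centrality α G := (centrality_eq hG (abs_lt.2 ⟨by linarith, hα1⟩)).symm

lemma sum_centrality (hG : G ∈ rowStochastic ℝ ι) (hα : |α| < 1) :
    (1 - α) * ∑ i, centrality α G i = Fintype.card ι := by
  have h := congrArg (fun v : ι → ℝ => ∑ i, v i) (centrality_eq hG hα)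
  simp only [Pi.add_apply, Pi.one_apply, Pi.smul_apply, smul_eq_mul, sum_add_distrib,
    ← mul_sum, sum_vecMul_of_mem_rowStochastic hG, sum_const, card_univ, nsmul_eq_mul,
    mul_one] at h
  linarith

theorem centrality_le (hG : G ∈ rowStochastic ℝ ι) (hα0 : 0 ≤ α) (hα1 : α < 1) {j : ι}
    (hjj : G j j = 0) :
    centrality α G j ≤ (1 + α * (Fintype.card ι - 1)) / (1 - α ^ 2) := by
  set c := centrality α G
  have hc0 := centrality_nonneg hG hα0 hα1
  -- as `G j j = 0`, the inflow into `j` comes only from the other agents, each with weight `≤ 1`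
  have hin : (c ᵥ* G) j ≤ ∑ i, c i - c j := by
    have h : c j ≤ ∑ i, c i * (1 - G i j) := by
      simpa [hjj] using single_le_sum (f := fun i => c i * (1 - G i j))
        (fun i _ => mul_nonneg (hc0 i) (sub_nonneg.2 (le_one_of_mem_rowStochastic hG)))
        (mem_univ j)
    simp only [mul_sub, mul_one, sum_sub_distrib] at h
    simp only [vecMul, dotProduct]
    linarith
  have hα : |α| < 1 := abs_lt.2 ⟨by linarith, hα1⟩
  have hcj : c j = 1 + α * (c ᵥ* G) j := congrFun (centrality_eq hG hα) j
  have hs := sum_centrality hG hα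
  have hcj' : c j * (1 + α) ≤ 1 + α * ∑ i, c i := by nlinarith
  rw [le_div_iff₀ (by nlinarith)]
  nlinarith [mul_le_mul_of_nonneg_left hcj' (sub_nonneg.2 hα1.le)]

end Centrality

theorem no_seeding_above_star_threshold_general (n : ℕ) (δ β vc : ℝ)
    (hδ0 : 0 < δ) (hδβ : δ < 2 * β)
    (hvc : (1 + δ * (n - 1) / (2 * β)) / (1 - (δ / (2 * β)) ^ 2) < vc) :
    ∀ G : Matrix (Fin n) (Fin n) ℝ,
      (∀ i j, 0 ≤ G i j) → (∀ i, ∑ j, G i j = 1) → (∀ i, G i i = 0) →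
      ∀ v : Fin n → ℝ,
        v = ((1 : Matrix (Fin n) (Fin n) ℝ) - δ • ((2 * β)⁻¹ • G)ᵀ)⁻¹ *ᵥ (fun _ => (1 : ℝ)) →
        ∀ j, v j ≤ vc := by
  intro G hG0 hGrow hGdiag v hv j
  have hβ : 0 < 2 * β := hδ0.trans hδβ
  have hα0 : 0 ≤ δ / (2 * β) := by positivity
  have hα1 : δ / (2 * β) < 1 := (div_lt_one hβ).2 hδβ
  have hG : G ∈ rowStochastic ℝ (Fin n) := mem_rowStochastic_iff_sum.2 ⟨hG0, hGrow⟩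
  have hv' : v = centrality (δ / (2 * β)) G := by
    rw [hv, centrality, transpose_smul, smul_smul, ← div_eq_mul_inv]
    rfl
  have hbound := hv' ▸ centrality_le hG hα0 hα1 (hGdiag j)
  rw [Fintype.card_fin, div_mul_eq_mul_div] at hbound
  linarith

theorem no_seeding_above_star_threshold (n : ℕ) (hn : 2 ≤ n) (δ β vc : ℝ)
    (hδ0 : 0 < δ) (hδβ : δ < 2 * β)
    (hvc : (1 + δ * (n - 1) / (2 * β)) / (1 - (δ / (2 * β)) ^ 2) < vc) :
    ∀ G : Matrix (Fin n) (Fin n) ℝ,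
      (∀ i j, 0 ≤ G i j) → (∀ i, ∑ j, G i j = 1) → (∀ i, G i i = 0) →
      ∀ v : Fin n → ℝ,
        v = ((1 : Matrix (Fin n) (Fin n) ℝ) - δ • ((2 * β)⁻¹ • G)ᵀ)⁻¹ *ᵥ (fun _ => (1 : ℝ)) →
        ∀ j, v j ≤ vc :=
  no_seeding_above_star_threshold_general n δ β vc hδ0 hδβ hvc
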